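/- arXiv:math/0607178 — 3 statements merged into one kernel-verified Lean document; each statement's English description precedes it below -/
import Mathlib

section
/- Let f : Σ_N → Σ_N be a shift-commuting map that is additive (f(x + y) = f(x) + f(y), where addition on Σ_N = ℤ → ZMod N is coordinatewise) and whose kernel {x : f(x) = 0} is finite, say of cardinality M. Then for every prime p > max(M, N), the number of points x with σ^p(x) = x that are periodic under f is at least N^{p-1}. -/
/-!
Let `H` be the group of `p`-periodic sequences; it has `N ^ p` elements and `f` maps it into
itself. If `x ∈ H` and `f x` is constant, then `d = σ x - x ∈ ker f`. Were `d` not constant, its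
`p` distinct shifts would all lie in `ker f`, contradicting `M < p`; so `d` is a constant `c`,
and `x (i + p) = x i + p • c` forces `c = 0` since `p` is prime to `N`. Inductively, the kernel of
every iterate of `f` on `H` consists of constants, hence has at most `N` elements. Finally, the
periodic points of an endomorphism of a finite group contain the image of some iterate, which has
at least `|H| / N = N ^ (p - 1)` elements.
-/

/-- The shift map on the full shift `ℤ → A`. -/
def shift {A : Type*} (x : ℤ → A) : ℤ → A := fun i => x (i + 1)

open Function Set

namespace Function

theorem exists_range_iterate_subset_periodicPts {α : Type*} [Finite α] (g : α → α) :
    ∃ a, range g^[a] ⊆ periodicPts g := by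
  obtain ⟨a, b, hne, heq⟩ := Finite.exists_ne_map_eq_of_infinite (fun k : ℕ => g^[k])
  wlog hab : a < b generalizing a b
  · exact this b a hne.symm heq.symm (hne.lt_or_gt.resolve_left hab)
  refine ⟨a, ?_⟩
  rintro _ ⟨x, rfl⟩
  refine mk_mem_periodicPts (n := b - a) (by omega) ?_
  change g^[b - a] (g^[a] x) = g^[a] x
  rw [← iterate_add_apply, Nat.sub_add_cancel hab.le]
  exact (congrFun heq x).symm

theorem minimalPeriod_le_ncard {α : Type*} {g : α → α} {S : Set α} (hS : S.Finite)
    (hg : MapsTo g S S) {x : α} (hx : x ∈ S) : minimalPeriod g x ≤ S.ncard := by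
  simpa using Set.ncard_le_ncard_of_injOn (g^[·] x) (fun j _ => hg.iterate j hx)
    iterate_injOn_Iio_minimalPeriod hS

end Function

theorem card_le_mul_ncard_periodicPts {G : Type*} [AddGroup G] [Finite G]
    (φ : G →+ G) {n : ℕ} (hker : ∀ k, {x | φ^[k] x = 0}.ncard ≤ n) :
    Nat.card G ≤ n * (periodicPts φ).ncard := by
  obtain ⟨a, ha⟩ := exists_range_iterate_subset_periodicPts φ
  let ψ : G →+ G := (show AddMonoid.End G from φ) ^ a
  have hψ : ⇑ψ = φ^[a] := AddMonoid.End.coe_pow G φ a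
  calc Nat.card G = Nat.card ψ.ker * Nat.card ψ.range := by
        rw [← AddSubgroup.index_ker, AddSubgroup.card_mul_index]
    _ ≤ n * (periodicPts φ).ncard := by
        gcongr
        · rw [← SetLike.coe_sort_coe, Nat.card_coe_set_eq, AddMonoidHom.coe_ker]
          exact hψ ▸ hker a
        · rw [← SetLike.coe_sort_coe, Nat.card_coe_set_eq, AddMonoidHom.coe_range, hψ]
          exact ncard_le_ncard ha

section Shift

variable {A : Type*}

theorem iterate_shift (k : ℕ) (x : ℤ → A) : shift^[k] x = fun i => x (i + k) := by
  induction k generalizing x with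
  | zero => simp
  | succ k ih =>
    rw [iterate_succ_apply, ih]
    funext i
    simp only [shift, Nat.cast_succ]
    ring_nf

theorem isPeriodicPt_shift_iff {k : ℕ} {x : ℤ → A} :
    IsPeriodicPt shift k x ↔ Periodic x k := by
  rw [IsPeriodicPt, IsFixedPt, iterate_shift, funext_iff]
  rfl

theorem isFixedPt_shift_iff {x : ℤ → A} : IsFixedPt shift x ↔ Periodic x 1 := funext_iff

theorem eq_of_isFixedPt_shift {x y : ℤ → A} (hx : IsFixedPt shift x) (hy : IsFixedPt shift y)
    (h₀ : x 0 = y 0) : x = y := by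
  funext i
  have hxi := (isFixedPt_shift_iff.mp hx).int_mul_eq i
  have hyi := (isFixedPt_shift_iff.mp hy).int_mul_eq i
  rw [mul_one, Int.cast_id] at hxi hyi
  rw [hxi, hyi, h₀]

variable (A) in
def periodicSubgroup [AddGroup A] (p : ℕ) : AddSubgroup (ℤ → A) where
  carrier := {x | IsPeriodicPt shift p x}
  add_mem' hx hy := isPeriodicPt_shift_iff.mpr <|
    (isPeriodicPt_shift_iff.mp hx).add (isPeriodicPt_shift_iff.mp hy)
  zero_mem' := isPeriodicPt_shift_iff.mpr fun _ => rfl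
  neg_mem' hx := isPeriodicPt_shift_iff.mpr <| (isPeriodicPt_shift_iff.mp hx).comp Neg.neg

variable (A) in
def periodicSubgroupEquiv [AddGroup A] (p : ℕ) [NeZero p] :
    periodicSubgroup A p ≃ (ZMod p → A) where
  toFun x a := (x : ℤ → A) a.val
  invFun v := ⟨fun i => v i, isPeriodicPt_shift_iff.mpr fun i => by simp⟩
  left_inv x := by
    ext i
    have hx : Periodic (x : ℤ → A) p := isPeriodicPt_shift_iff.mp x.2
    change (x : ℤ → A) ((i : ZMod p).val : ℤ) = (x : ℤ → A) i
    rw [ZMod.val_intCast, Int.emod_def, mul_comm]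
    exact hx.sub_int_mul_eq (i / p)
  right_inv v := by
    funext a
    simp

theorem card_periodicSubgroup [AddGroup A] (p : ℕ) [NeZero p] :
    Nat.card (periodicSubgroup A p) = Nat.card A ^ p := by
  rw [Nat.card_congr (periodicSubgroupEquiv A p), Nat.card_fun, Nat.card_zmod]

instance [AddGroup A] [Finite A] (p : ℕ) [NeZero p] : Finite (periodicSubgroup A p) :=
  .of_equiv _ (periodicSubgroupEquiv A p).symm

theorem iterate_shift_eq_add_nsmul [AddCommGroup A] {x : ℤ → A}
    (hd : IsFixedPt shift (shift x - x)) (k : ℕ) : shift^[k] x = x + k • (shift x - x) := by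
  induction k with
  | zero => simp
  | succ k ih =>
    rw [iterate_succ_apply', ih]
    change shift x + k • shift (shift x - x) = _
    rw [hd.eq, succ_nsmul]
    abel

def AddMonoidHom.restrictPeriodic [AddGroup A] (f : (ℤ → A) →+ (ℤ → A))
    (hf : Function.Commute f shift) (p : ℕ) : periodicSubgroup A p →+ periodicSubgroup A p :=
  (f.comp (periodicSubgroup A p).subtype).codRestrict _ fun x => x.2.map hf

theorem AddMonoidHom.semiconj_val_restrictPeriodic [AddGroup A] (f : (ℤ → A) →+ (ℤ → A))
    (hf : Function.Commute f shift) (p : ℕ) :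
    Semiconj Subtype.val (f.restrictPeriodic hf p) f :=
  fun _ => rfl

theorem ncard_periodicPts_restrictPeriodic_le [AddGroup A] [Finite A]
    (f : (ℤ → A) →+ (ℤ → A)) (hf : Function.Commute f shift) (p : ℕ) [NeZero p] :
    (periodicPts (f.restrictPeriodic hf p)).ncard ≤
      {x | IsPeriodicPt shift p x ∧ x ∈ periodicPts f}.ncard := by
  rw [← ncard_image_of_injective _ Subtype.val_injective]
  refine ncard_le_ncard ?_ ((finite_range (Subtype.val : periodicSubgroup A p → ℤ → A)).subset
    fun x hx => ⟨⟨x, hx.1⟩, rfl⟩)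
  rintro _ ⟨x, ⟨q, hq, hxq⟩, rfl⟩
  exact ⟨x.2, q, hq, hxq.map (f.semiconj_val_restrictPeriodic hf p)⟩

section KernelOfIterates

variable [AddCommGroup A] {f : (ℤ → A) →+ (ℤ → A)} (hf : Function.Commute f shift) {p : ℕ}
  [Fact p.Prime] (htors : ∀ c : A, p • c = 0 → c = 0) (hker : {x | f x = 0}.Finite)
  (hkerp : {x | f x = 0}.ncard < p)
include hf htors hker hkerp

theorem isFixedPt_shift_of_isFixedPt_shift_map {x : ℤ → A} (hx : IsPeriodicPt shift p x)
    (hfx : IsFixedPt shift (f x)) : IsFixedPt shift x := by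
  set d := shift x - x
  have hfd : f d = 0 := by rw [map_sub, hf x, hfx.eq, sub_self]
  have hd : IsPeriodicPt shift p d := (periodicSubgroup A p).sub_mem hx.apply hx
  have hd_fixed : IsFixedPt shift d := by
    by_contra hnot
    have hmaps : MapsTo shift {x | f x = 0} {x | f x = 0} := fun y (hy : f y = 0) => by
      change f (shift y) = 0
      rw [hf y, hy]
      rfl
    have hle := minimalPeriod_le_ncard hker hmaps hfd
    rw [minimalPeriod_eq_prime hd hnot] at hle
    omega
  have hpd : p • d = 0 := add_eq_left.mp ((iterate_shift_eq_add_nsmul hd_fixed p).symm.trans hx)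
  exact sub_eq_zero.mp (funext fun i => htors _ (congrFun hpd i))

theorem isFixedPt_shift_of_iterate_map_eq_zero (k : ℕ) {x : ℤ → A}
    (hx : IsPeriodicPt shift p x) (hfx : f^[k] x = 0) : IsFixedPt shift x := by
  induction k generalizing x with
  | zero => rw [iterate_zero_apply] at hfx; exact hfx ▸ rfl
  | succ k ih =>
    exact isFixedPt_shift_of_isFixedPt_shift_map hf htors hker hkerp hx
      (ih (hx.map hf) (iterate_succ_apply f k x ▸ hfx))

theorem ncard_setOf_iterate_restrictPeriodic_eq_zero_le [Finite A] (k : ℕ) :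
    {x | (f.restrictPeriodic hf p)^[k] x = 0}.ncard ≤ Nat.card A := by
  have hfixed {x : periodicSubgroup A p} (hx : (f.restrictPeriodic hf p)^[k] x = 0) :
      IsFixedPt shift (x : ℤ → A) :=
    isFixedPt_shift_of_iterate_map_eq_zero hf htors hker hkerp k x.2 <| by
      rw [← (f.semiconj_val_restrictPeriodic hf p).iterate_right k x, hx]
      rfl
  rw [← ncard_univ]
  exact ncard_le_ncard_of_injOn (fun x : periodicSubgroup A p => (x : ℤ → A) 0)
    (fun _ _ => mem_univ _)
    fun x hx y hy hxy => Subtype.ext <| eq_of_isFixedPt_shift (hfixed hx) (hfixed hy) hxy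

end KernelOfIterates

end Shift

theorem ZMod.eq_zero_of_nsmul_eq_zero {N p : ℕ} (hpN : p.Coprime N) {c : ZMod N}
    (hc : p • c = 0) : c = 0 := by
  rw [nsmul_eq_mul] at hc
  exact ((ZMod.isUnit_iff_coprime p N).mpr hpN).mul_right_eq_zero.mp hc

theorem stmt7 {N : ℕ} (f : (ℤ → ZMod N) → (ℤ → ZMod N))
    (hcomm : ∀ x, f (shift x) = shift (f x))
    (hadd : ∀ x y, f (x + y) = f x + f y)
    (M : ℕ) (hfin : ({x : ℤ → ZMod N | f x = 0}).Finite)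
    (hM : ({x : ℤ → ZMod N | f x = 0}).ncard = M)
    (p : ℕ) (hp : p.Prime) (hpM : max M N < p) :
    N ^ (p - 1) ≤
      ({x : ℤ → ZMod N | shift^[p] x = x ∧ ∃ q, 1 ≤ q ∧ f^[q] x = x}).ncard := by
  rcases N.eq_zero_or_pos with rfl | hN
  · rw [zero_pow (by have := hp.two_le; omega)]
    exact Nat.zero_le _
  have : NeZero N := ⟨hN.ne'⟩
  have : Fact p.Prime := ⟨hp⟩
  let φ := AddMonoidHom.mk' f hadd
  have htors (c : ZMod N) : p • c = 0 → c = 0 :=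
    ZMod.eq_zero_of_nsmul_eq_zero (Nat.coprime_of_lt_prime hN.ne' (by omega) hp)
  have hker (k : ℕ) := ncard_setOf_iterate_restrictPeriodic_eq_zero_le (f := φ) hcomm htors hfin
    (show {x | f x = 0}.ncard < p by omega) k
  have hcard := card_le_mul_ncard_periodicPts _ hker
  rw [card_periodicSubgroup, Nat.card_zmod] at hcard
  refine (Nat.le_of_mul_le_mul_left ?_ hN).trans (ncard_periodicPts_restrictPeriodic_le φ hcomm p)
  rwa [← pow_succ', Nat.sub_add_cancel hp.one_lt.le]
end

section
/- Let f : Σ_2 → Σ_2 be defined by f(x)(i) = x(i) + x(i+1) (mod 2). Let k = q · 2^j with q odd and j ≥ 0. Then for every x ∈ Σ_2 with σ^k(x) = x, the point f^{2^j}(x) is periodic under f, i.e. there exists p ≥ 1 with f^{2^j + p}(x) = f^{2^j}(x). -/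
/-- The addition cellular automaton `x ↦ x + σ x` on the 2-shift. -/
def addCA (x : ℤ → ZMod 2) : ℤ → ZMod 2 := fun i => x i + x (i + 1)

lemma shift_iter {A : Type*} (n : ℕ) (x : ℤ → A) (i : ℤ) :
    shift^[n] x i = x (i + n) := by
  induction n generalizing i with
  | zero => simp
  | succ n ih =>
    rw [Function.iterate_succ_apply', shift, ih]
    push_cast
    ring_nf

lemma addCA_pow2 (s : ℕ) (x : ℤ → ZMod 2) (i : ℤ) :
    addCA^[2 ^ s] x i = x i + x (i + 2 ^ s) := by
  induction s generalizing x i with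
  | zero => simp [addCA]
  | succ s ih =>
    have h2 : (2 : ℕ) ^ (s + 1) = 2 ^ s + 2 ^ s := by ring
    rw [h2, Function.iterate_add_apply, ih, ih, ih]
    have : (i + 2 ^ s + 2 ^ s : ℤ) = i + (2 : ℤ) ^ (s + 1) := by push_cast; ring
    rw [this]
    linear_combination CharTwo.add_self_eq_zero (x (i + (2:ℤ) ^ s))

theorem stmt9 (q j k : ℕ) (hq : Odd q) (hk : k = q * 2 ^ j)
    (x : ℤ → ZMod 2) (hx : shift^[k] x = x) :
    ∃ p, 1 ≤ p ∧ addCA^[2 ^ j + p] x = addCA^[2 ^ j] x := by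
  have hper : ∀ i : ℤ, x (i + k) = x i := by
    intro i
    conv_rhs => rw [← hx]
    rw [shift_iter]
  have hperm : ∀ (m : ℕ) (i : ℤ), x (i + m * k) = x i := by
    intro m
    induction m with
    | zero => simp
    | succ m ih =>
      intro i
      have : (i + (↑(m+1)) * k : ℤ) = (i + m * k) + k := by push_cast; ring
      rw [this, hper, ih]
  set d := q.totient with hd
  have hq0 : 0 < q := hq.pos
  have hdpos : 0 < d := Nat.totient_pos.mpr hq0
  have hcop : Nat.Coprime 2 q := Nat.coprime_two_left.mpr hq
  have heuler : 2 ^ d ≡ 1 [MOD q] := Nat.ModEq.pow_totient hcop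
  have hdvd : q ∣ 2 ^ d - 1 := by
    have h1 : 1 ≤ 2 ^ d := Nat.one_le_two_pow
    have := (Nat.modEq_iff_dvd' h1).mp heuler.symm
    exact this
  obtain ⟨m, hm⟩ := hdvd
  have hlt : 2 ^ j < 2 ^ (j + d) :=
    Nat.pow_lt_pow_right (by norm_num) (by omega)
  refine ⟨2 ^ (j + d) - 2 ^ j, by omega, ?_⟩
  have hsum : 2 ^ j + (2 ^ (j + d) - 2 ^ j) = 2 ^ (j + d) := by omega
  rw [hsum]
  funext i
  rw [addCA_pow2, addCA_pow2]
  have hnat : (2 : ℕ) ^ (j + d) = 2 ^ j + m * k := by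
    have h1 : 2 ^ (j + d) = 2 ^ j * 2 ^ d := pow_add 2 j d
    have h3 : 1 ≤ 2 ^ d := Nat.one_le_two_pow
    have h2 : 2 ^ d = 1 + q * m := by omega
    rw [h1, h2, hk]; ring
  have hkey : (i + 2 ^ (j + d) : ℤ) = (i + 2 ^ j) + m * k := by
    rw [show ((2:ℤ) ^ (j + d)) = ((2 ^ (j + d) : ℕ) : ℤ) by push_cast; ring, hnat]
    push_cast; ring
  rw [hkey, hperm m (i + 2 ^ j)]
end

section
/- Let f : Σ_N → Σ_N commute with the shift σ, with N ≥ 2. Suppose there exists a word w of length m ≥ 1 over the alphabet Fin N that does not occur in any jointly periodic point (a point periodic under both σ and f). Then limsup_{k→∞} P_k^{1/k} < N, where P_k is the number of points in Fix(σ^k) that are f-periodic. -/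
/-!
The word `x 0 … x (k - 1)` of a jointly periodic point in `Fix(σ^k)` determines it, and cut into
`k / m` aligned blocks of length `m` followed by `k % m` letters, none of its blocks is `w`.
Hence there are at most `(N^m - 1)^(k / m) * N^(k % m) ≤ N^m * a^k` such points, where
`a = (N^m - 1)^(1/m) < N`, and the `k`-th roots of these bounds tend to `a`.
-/

open Filter

section FullShift

variable {α : Type*}

lemma shift_iterate_apply (k : ℕ) (x : ℤ → α) (i : ℤ) : shift^[k] x i = x (i + k) := by
  induction k generalizing i with
  | zero => simp
  | succ n ih =>
    rw [Function.iterate_succ_apply', shift, ih]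
    push_cast
    ring_nf

lemma periodic_of_shift_iterate_eq {k : ℕ} {x : ℤ → α} (hx : shift^[k] x = x) :
    Function.Periodic x k :=
  fun i => (shift_iterate_apply k x i).symm.trans (congrFun hx i)

lemma eq_of_shift_iterate_eq_of_forall_lt {k : ℕ} (hk : 0 < k) {x y : ℤ → α}
    (hx : shift^[k] x = x) (hy : shift^[k] y = y) (h : ∀ t : ℕ, t < k → x t = y t) :
    x = y := by
  funext n
  have hk' : (0 : ℤ) < k := by exact_mod_cast hk
  have reduce : ∀ z : ℤ → α, shift^[k] z = z → z n = z (n % k) := fun z hz => by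
    rw [Int.emod_def, mul_comm]
    exact ((periodic_of_shift_iterate_eq hz).sub_int_mul_eq (n / k)).symm
  rw [reduce x hx, reduce y hy]
  have hlt := Int.emod_lt_of_pos n hk'
  lift n % k to ℕ using Int.emod_nonneg n hk'.ne' with t ht
  exact h t (by omega)

def alignedBlocks (m q r : ℕ) (x : ℤ → α) : (Fin q → Fin m → α) × (Fin r → α) :=
  (fun i j => x ((i * m + j : ℕ) : ℤ), fun j => x ((q * m + j : ℕ) : ℤ))

lemma eq_of_alignedBlocks_eq {m q r : ℕ} {x y : ℤ → α}
    (h : alignedBlocks m q r x = alignedBlocks m q r y) (t : ℕ) (ht : t < q * m + r) :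
    x t = y t := by
  simp only [alignedBlocks, Prod.mk.injEq, funext_iff] at h
  obtain ⟨hblocks, htail⟩ := h
  by_cases hqm : t < q * m
  · have hm : 0 < m := Nat.pos_of_ne_zero (by rintro rfl; simp at hqm)
    have := hblocks ⟨t / m, Nat.div_lt_of_lt_mul (by rwa [mul_comm])⟩ ⟨t % m, Nat.mod_lt t hm⟩
    rwa [Nat.div_add_mod'] at this
  · have := htail ⟨t - q * m, by omega⟩
    rwa [Nat.add_sub_cancel' (by omega)] at this

/-- A `k`-periodic point is determined by its first `k / m` blocks of length `m`, none equal to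
`w`, and the `k % m` letters after them. -/
theorem ncard_le_of_alignedBlock_ne [Fintype α] {k m : ℕ} (hk : 0 < k) (w : Fin m → α)
    {S : Set (ℤ → α)} (hper : ∀ x ∈ S, shift^[k] x = x)
    (havoid : ∀ x ∈ S, ∀ i : ℕ, (fun j : Fin m => x ((i * m + j : ℕ) : ℤ)) ≠ w) :
    S.ncard ≤ (Fintype.card α ^ m - 1) ^ (k / m) * Fintype.card α ^ (k % m) := by
  classical
  have hk_eq : k / m * m + k % m = k := Nat.div_add_mod' k m
  let T : Finset ((Fin (k / m) → Fin m → α) × (Fin (k % m) → α)) :=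
    Fintype.piFinset (fun _ => {w}ᶜ) ×ˢ Finset.univ
  have hmaps : Set.MapsTo (alignedBlocks m (k / m) (k % m)) S T := by
    intro x hx
    rw [Finset.mem_coe, Finset.mem_product, Fintype.mem_piFinset]
    exact ⟨fun i => by simpa [alignedBlocks] using havoid x hx i, Finset.mem_univ _⟩
  have hinj : Set.InjOn (alignedBlocks m (k / m) (k % m)) S := fun x hx y hy hxy =>
    eq_of_shift_iterate_eq_of_forall_lt hk (hper x hx) (hper y hy)
      fun t ht => eq_of_alignedBlocks_eq hxy t (by rwa [hk_eq])
  calc S.ncard ≤ T.card :=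
        (Set.ncard_le_ncard_of_injOn _ hmaps hinj).trans_eq (Set.ncard_coe_finset T)
    _ = (Fintype.card α ^ m - 1) ^ (k / m) * Fintype.card α ^ (k % m) := by
        simp [T, Finset.card_compl]

end FullShift

lemma pow_div_mul_pow_mod_le {b c : ℝ} (hb : 1 ≤ b) (hc : 1 ≤ c) {m : ℕ} (hm : 0 < m) (k : ℕ) :
    b ^ (k / m) * c ^ (k % m) ≤ c ^ m * (b ^ (m : ℝ)⁻¹) ^ k := by
  have hroot : b ^ (k / m) = (b ^ (m : ℝ)⁻¹) ^ (m * (k / m)) := by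
    rw [pow_mul, Real.rpow_inv_natCast_pow (by linarith) hm.ne']
  rw [hroot, mul_comm]
  gcongr
  · exact (Nat.mod_lt k hm).le
  · exact Real.one_le_rpow hb (by positivity)
  · exact Nat.mul_div_le k m

lemma limsup_rpow_inv_le_of_le_mul_pow {u : ℕ → ℝ} (hu : ∀ k, 0 ≤ u k) {C a : ℝ} (hC : 0 < C)
    (ha : 0 ≤ a) (h : ∀ᶠ k in atTop, u k ≤ C * a ^ k) :
    limsup (fun k : ℕ => u k ^ (k : ℝ)⁻¹) atTop ≤ a := by
  have hroot_C : Tendsto (fun k : ℕ => C ^ (k : ℝ)⁻¹ * a) atTop (nhds a) := by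
    have := ((Real.continuousAt_const_rpow hC.ne').tendsto.comp
      (tendsto_inv_atTop_zero.comp tendsto_natCast_atTop_atTop)).mul_const a
    simpa [Function.comp_def] using this
  have hle : ∀ᶠ k : ℕ in atTop, u k ^ (k : ℝ)⁻¹ ≤ C ^ (k : ℝ)⁻¹ * a := by
    filter_upwards [h, eventually_ge_atTop 1] with k hk hk1
    calc u k ^ (k : ℝ)⁻¹ ≤ (C * a ^ k) ^ (k : ℝ)⁻¹ := by gcongr; exact hu k
      _ = C ^ (k : ℝ)⁻¹ * a := by
        rw [Real.mul_rpow hC.le (by positivity), Real.pow_rpow_inv_natCast ha (by omega)]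
  rw [← hroot_C.limsup_eq]
  refine limsup_le_limsup hle ?_ hroot_C.isBoundedUnder_le
  exact isCoboundedUnder_le_of_le atTop fun k => Real.rpow_nonneg (hu k) _

lemma rpow_inv_natCast_sub_one_lt {c : ℝ} (hc : 1 ≤ c) {m : ℕ} (hm : 0 < m) :
    (c ^ m - 1) ^ (m : ℝ)⁻¹ < c := by
  have hcm : 1 ≤ c ^ m := one_le_pow₀ hc
  rw [Real.rpow_inv_lt_iff_of_pos (by linarith) (by linarith) (by positivity), Real.rpow_natCast]
  linarith

theorem stmt15_general {N : ℕ} (hN : 2 ≤ N) (f : (ℤ → Fin N) → (ℤ → Fin N))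
    (m : ℕ) (hm : 1 ≤ m) (w : Fin m → Fin N)
    (hw : ∀ x : ℤ → Fin N, (∃ k, 1 ≤ k ∧ shift^[k] x = x) →
      (∃ p, 1 ≤ p ∧ f^[p] x = x) →
      ∀ i : ℤ, ¬ (∀ j : Fin m, x (i + ((j : ℕ) : ℤ)) = w j)) :
    Filter.limsup (fun k : ℕ =>
      ((({x : ℤ → Fin N | shift^[k] x = x ∧ ∃ p, 1 ≤ p ∧ f^[p] x = x}).ncard : ℕ) : ℝ)
        ^ ((k : ℝ)⁻¹)) Filter.atTop < N := by
  have hN2 : (2 : ℝ) ≤ N := by exact_mod_cast hN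
  have hN1 : (1 : ℝ) ≤ N := by linarith
  have hNm : (1 : ℝ) ≤ (N : ℝ) ^ m - 1 := by
    linarith [hN2.trans (le_self_pow₀ hN1 (by omega : m ≠ 0))]
  have hcount : ∀ k ≥ 1,
      (({x : ℤ → Fin N | shift^[k] x = x ∧ ∃ p, 1 ≤ p ∧ f^[p] x = x}).ncard : ℝ) ≤
        (N : ℝ) ^ m * (((N : ℝ) ^ m - 1) ^ (m : ℝ)⁻¹) ^ k := by
    intro k hk
    have hcard := ncard_le_of_alignedBlock_ne hk w
      (S := {x : ℤ → Fin N | shift^[k] x = x ∧ ∃ p, 1 ≤ p ∧ f^[p] x = x}) (fun x hx => hx.1)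
      fun x hx i hi => hw x ⟨k, hk, hx.1⟩ hx.2 (i * m) fun j => by simpa using congrFun hi j
    rw [Fintype.card_fin] at hcard
    calc _ ≤ ((N : ℝ) ^ m - 1) ^ (k / m) * (N : ℝ) ^ (k % m) := by
          have : 1 ≤ N ^ m := Nat.one_le_pow _ _ (by omega)
          exact_mod_cast hcard
      _ ≤ _ := pow_div_mul_pow_mod_le hNm hN1 hm k
  calc _ ≤ ((N : ℝ) ^ m - 1) ^ (m : ℝ)⁻¹ :=
        limsup_rpow_inv_le_of_le_mul_pow (fun _ => Nat.cast_nonneg _) (by positivity)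
          (by positivity) ((eventually_ge_atTop 1).mono hcount)
    _ < N := rpow_inv_natCast_sub_one_lt hN1 hm

theorem stmt15 {N : ℕ} (hN : 2 ≤ N) (f : (ℤ → Fin N) → (ℤ → Fin N))
    (hcomm : ∀ x, f (shift x) = shift (f x))
    (m : ℕ) (hm : 1 ≤ m) (w : Fin m → Fin N)
    (hw : ∀ x : ℤ → Fin N, (∃ k, 1 ≤ k ∧ shift^[k] x = x) →
      (∃ p, 1 ≤ p ∧ f^[p] x = x) →
      ∀ i : ℤ, ¬ (∀ j : Fin m, x (i + ((j : ℕ) : ℤ)) = w j)) :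
    Filter.limsup (fun k : ℕ =>
      ((({x : ℤ → Fin N | shift^[k] x = x ∧ ∃ p, 1 ≤ p ∧ f^[p] x = x}).ncard : ℕ) : ℝ)
        ^ ((k : ℝ)⁻¹)) Filter.atTop < N :=
  stmt15_general hN f m hm w hw
end
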